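/- The implicit component of SSP-LDIRK3(3,3,2) is L-stable: with A = [[γ,0,0],[1−2γ,γ,0],[1/2−γ,0,γ]], γ = 1 − √2/2, and b = (1/6, 1/6, 2/3), for every z ∈ ℂ with Re z ≤ 0 the matrix I − zA is invertible and the stability function R(z) = 1 + z·bᵀ(I − zA)⁻¹𝟙 satisfies |R(z)| ≤ 1; moreover bᵀA⁻¹𝟙 = 1, so that R(z) → 0 as |z| → ∞. -/

import Mathlib

/-!
Solving the lower-triangular stage equations by forward substitution gives
`R(z) = (1 + (1 - 2γ) z + (γ² - 2γ + 1/2) z²) / (1 - γ z)²`. The value `γ = 1 - √2/2` is a root of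
`γ² - 2γ + 1/2`, so `R(z) = (1 + a z) / (1 - γ z)²` with `a = 1 - 2γ`, and the same relation gives
`a² = 2γ²`. For `x = Re z ≤ 0` we have `1 - γ x ≥ 1`, which lets `|1 + a z|² ≤ |1 - γ z|⁴` be
checked separately on the `x`- and `y`-parts. At infinity, `R(1/w)` is a rational function of `w`
continuous at `0`, with value `(γ² - 2γ + 1/2) / γ² = 1 - bᵀA⁻¹𝟙`.
-/

open Matrix Filter Topology Bornology

noncomputable def stabilityFunction {ι K : Type*} [Fintype ι] [DecidableEq ι] [CommRing K]
    (A : Matrix ι ι K) (b : ι → K) (z : K) : K :=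
  1 + z * (b ⬝ᵥ ((1 - z • A)⁻¹ *ᵥ 1))

theorem Matrix.inv_mulVec_eq_of_mulVec_eq {n K : Type*} [Fintype n] [DecidableEq n] [CommRing K]
    {M : Matrix n n K} (hM : IsUnit M) {u v : n → K} (h : M *ᵥ v = u) : M⁻¹ *ᵥ u = v :=
  letI := hM.invertible
  inv_mulVec_eq_vec h.symm

namespace SSPLDIRK

section Field

variable {K : Type*} [Field K]

def coeffMatrix (γ : K) : Matrix (Fin 3) (Fin 3) K :=
  !![γ, 0, 0; 1 - 2 * γ, γ, 0; 1 / 2 - γ, 0, γ]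

def weights : Fin 3 → K := ![1 / 6, 1 / 6, 2 / 3]

lemma map_coeffMatrix {L : Type*} [Field L] (f : K →+* L) (γ : K) :
    (coeffMatrix γ).map f = coeffMatrix (f γ) := by
  ext i j
  fin_cases i <;> fin_cases j <;> simp [coeffMatrix, map_ofNat]

lemma det_one_sub_smul_coeffMatrix (γ z : K) :
    (1 - z • coeffMatrix γ).det = (1 - z * γ) ^ 3 := by
  simp only [coeffMatrix, smul_of, smul_cons, smul_eq_mul, smul_empty, det_fin_three,
    Matrix.sub_apply, one_apply_eq, one_apply_ne, of_apply, cons_val', cons_val_zero,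
    cons_val_fin_one, cons_val_one, cons_val, ne_eq, Fin.reduceEq, not_false_eq_true]
  ring

lemma isUnit_one_sub_smul_coeffMatrix {γ z : K} (h : 1 - z * γ ≠ 0) :
    IsUnit (1 - z • coeffMatrix γ) := by
  rw [isUnit_iff_isUnit_det, det_one_sub_smul_coeffMatrix]
  exact (pow_ne_zero 3 h).isUnit

lemma one_sub_smul_coeffMatrix_inv_mulVec_one [CharZero K] {γ z : K} (h : 1 - z * γ ≠ 0) :
    (1 - z • coeffMatrix γ)⁻¹ *ᵥ 1 =
      ![(1 - z * γ)⁻¹, (1 - z * γ + (1 - 2 * γ) * z) / (1 - z * γ) ^ 2,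
        (1 - z * γ + (1 / 2 - γ) * z) / (1 - z * γ) ^ 2] := by
  refine inv_mulVec_eq_of_mulVec_eq (isUnit_one_sub_smul_coeffMatrix h) ?_
  ext i
  fin_cases i <;>
    simp only [mulVec, dotProduct, Fin.sum_univ_three, coeffMatrix, smul_of, smul_cons,
      smul_eq_mul, smul_empty, Matrix.sub_apply, of_apply, cons_val', cons_val_fin_one,
      cons_val_zero, cons_val_one, cons_val, one_apply_eq, one_apply_ne, ne_eq, Fin.reduceEq,
      Fin.zero_eta, Fin.mk_one, Fin.reduceFinMk, not_false_eq_true, Pi.one_apply] <;>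
    field_simp <;> ring

theorem stabilityFunction_coeffMatrix [CharZero K] {γ z : K} (h : 1 - z * γ ≠ 0) :
    stabilityFunction (coeffMatrix γ) weights z =
      (1 + (1 - 2 * γ) * z + (γ ^ 2 - 2 * γ + 1 / 2) * z ^ 2) / (1 - z * γ) ^ 2 := by
  rw [stabilityFunction, one_sub_smul_coeffMatrix_inv_mulVec_one h]
  simp only [dotProduct, weights, Fin.sum_univ_three, cons_val_zero, cons_val_one, cons_val]
  field_simp
  ring

theorem weights_dotProduct_inv_mulVec_one [CharZero K] {γ : K} (hγ : γ ≠ 0) :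
    weights ⬝ᵥ ((coeffMatrix γ)⁻¹ *ᵥ 1) = 1 - (γ ^ 2 - 2 * γ + 1 / 2) / γ ^ 2 := by
  rw [inv_mulVec_eq_of_mulVec_eq (v := ![γ⁻¹, (3 * γ - 1) / γ ^ 2, (2 * γ - 1 / 2) / γ ^ 2])]
  · simp only [dotProduct, weights, Fin.sum_univ_three, cons_val_zero, cons_val_one, cons_val]
    field_simp
    ring
  · simp [isUnit_iff_isUnit_det, det_fin_three, coeffMatrix, hγ]
  · ext i
    fin_cases i <;>
      simp only [mulVec, dotProduct, Fin.sum_univ_three, coeffMatrix, of_apply, cons_val',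
        cons_val_fin_one, cons_val_zero, cons_val_one, cons_val, Fin.zero_eta, Fin.mk_one,
        Fin.reduceFinMk, Pi.one_apply] <;>
      field_simp <;> ring

end Field

theorem tendsto_stabilityFunction_coeffMatrix {𝕜 : Type*} [NormedField 𝕜] [CharZero 𝕜] {γ : 𝕜}
    (hγ : γ ≠ 0) :
    Tendsto (stabilityFunction (coeffMatrix γ) weights) (cobounded 𝕜)
      (𝓝 ((γ ^ 2 - 2 * γ + 1 / 2) / γ ^ 2)) := by
  set c := γ ^ 2 - 2 * γ + 1 / 2
  -- `R z = f z⁻¹` away from `z = 0` and `z = γ⁻¹`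
  let f : 𝕜 → 𝕜 := fun w => (w ^ 2 + (1 - 2 * γ) * w + c) / (w - γ) ^ 2
  have hf : Tendsto f (𝓝 0) (𝓝 (c / γ ^ 2)) := by
    have : ContinuousAt f 0 := by
      apply ContinuousAt.div (by fun_prop) (by fun_prop)
      simpa using hγ
    simpa [f] using this.tendsto
  refine (hf.comp tendsto_inv₀_cobounded).congr' ?_
  filter_upwards [isBounded_singleton (x := 0), isBounded_singleton (x := γ⁻¹)] with z hz0 hzγ
  have hz : z ≠ 0 := hz0
  have hd : 1 - z * γ ≠ 0 := fun h => hzγ (eq_inv_of_mul_eq_one_left (sub_eq_zero.1 h).symm)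
  have hd' : z⁻¹ - γ ≠ 0 := fun h => hzγ (inv_eq_iff_eq_inv.1 (sub_eq_zero.1 h))
  rw [Function.comp_apply, stabilityFunction_coeffMatrix hd]
  simp only [f]
  field_simp
  ring

lemma one_sub_mul_ofReal_ne_zero {γ : ℝ} (hγ : 0 ≤ γ) {z : ℂ} (hz : z.re ≤ 0) :
    1 - z * γ ≠ 0 := by
  intro h
  have := congrArg Complex.re h
  simp only [Complex.sub_re, Complex.one_re, Complex.mul_re, Complex.ofReal_re,
    Complex.ofReal_im, mul_zero, sub_zero, Complex.zero_re] at this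
  nlinarith [mul_nonpos_of_nonpos_of_nonneg hz hγ]

lemma norm_one_add_mul_le_norm_one_sub_mul_sq {γ a : ℝ} (hγ : 0 ≤ γ) (ha : a ^ 2 ≤ 2 * γ ^ 2)
    {z : ℂ} (hz : z.re ≤ 0) : ‖1 + z * a‖ ≤ ‖1 - z * γ‖ ^ 2 := by
  refine (sq_le_sq₀ (norm_nonneg _) (by positivity)).1 ?_
  rw [Complex.sq_norm, Complex.sq_norm, Complex.normSq_apply, Complex.normSq_apply]
  simp only [Complex.add_re, Complex.sub_re, Complex.add_im, Complex.sub_im, Complex.mul_re,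
    Complex.mul_im, Complex.ofReal_re, Complex.ofReal_im, Complex.one_re, Complex.one_im,
    mul_zero, sub_zero, zero_add, zero_sub]
  set x := z.re
  set y := z.im
  obtain ⟨ha₁, ha₂⟩ := abs_le_of_sq_le_sq' (a := a) (b := 2 * γ) (by nlinarith) (by positivity)
  have hd : 1 ≤ 1 - x * γ := by nlinarith
  have hre : (1 + x * a) ^ 2 ≤ ((1 - x * γ) ^ 2) ^ 2 :=
    sq_le_sq' (by nlinarith) (by nlinarith)
  have him : a ^ 2 * y ^ 2 ≤ 2 * γ ^ 2 * y ^ 2 * (1 - x * γ) ^ 2 := by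
    have hd₂ : 0 ≤ (1 - x * γ) ^ 2 - 1 := by nlinarith
    nlinarith [mul_le_mul_of_nonneg_right ha (sq_nonneg y),
      mul_nonneg (mul_nonneg (sq_nonneg γ) (sq_nonneg y)) hd₂]
  nlinarith [sq_nonneg (γ ^ 2 * y ^ 2)]

lemma pos_of_sq_sub_two_mul_add_half_eq_zero {γ : ℝ} (hγ : γ ^ 2 - 2 * γ + 1 / 2 = 0) :
    0 < γ := by
  nlinarith [sq_nonneg γ]

theorem norm_stabilityFunction_le_one {γ : ℝ} (hγ : γ ^ 2 - 2 * γ + 1 / 2 = 0) {z : ℂ}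
    (hz : z.re ≤ 0) : ‖stabilityFunction (coeffMatrix (γ : ℂ)) weights z‖ ≤ 1 := by
  have hγ₀ := pos_of_sq_sub_two_mul_add_half_eq_zero hγ
  have hd := one_sub_mul_ofReal_ne_zero hγ₀.le hz
  have hγC : (γ : ℂ) ^ 2 - 2 * γ + 1 / 2 = 0 := by
    simpa using congrArg Complex.ofReal hγ
  have ha : (1 - 2 * γ) ^ 2 ≤ 2 * γ ^ 2 := by linear_combination 2 * hγ
  rw [stabilityFunction_coeffMatrix hd, hγC, zero_mul, add_zero, mul_comm,
    show 1 - 2 * (γ : ℂ) = ((1 - 2 * γ : ℝ) : ℂ) by push_cast; ring, norm_div, norm_pow,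
    div_le_one (by positivity)]
  exact norm_one_add_mul_le_norm_one_sub_mul_sq hγ₀.le ha hz

end SSPLDIRK

open SSPLDIRK

theorem stmt_10 :
    let g : ℝ := 1 - Real.sqrt 2 / 2
    let A : Matrix (Fin 3) (Fin 3) ℝ := !![g, 0, 0; 1 - 2*g, g, 0; 1/2 - g, 0, g]
    let b : Fin 3 → ℝ := ![1/6, 1/6, 2/3]
    let AC : Matrix (Fin 3) (Fin 3) ℂ := A.map Complex.ofReal
    let bC : Fin 3 → ℂ := fun i => (b i : ℂ)
    let R : ℂ → ℂ := fun z => 1 + z * (bC ⬝ᵥ ((1 - z • AC)⁻¹ *ᵥ 1))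
    (∀ z : ℂ, z.re ≤ 0 → IsUnit (1 - z • AC) ∧ ‖R z‖ ≤ 1) ∧
      b ⬝ᵥ (A⁻¹ *ᵥ 1) = 1 ∧
      Filter.Tendsto R (Filter.comap (fun z : ℂ => ‖z‖) Filter.atTop) (nhds 0) := by
  intro g A b AC bC R
  have hg : g ^ 2 - 2 * g + 1 / 2 = 0 := by
    simp only [g]
    linear_combination (1 / 4 : ℝ) * Real.sq_sqrt (show (0 : ℝ) ≤ 2 by norm_num)
  have hg₀ := pos_of_sq_sub_two_mul_add_half_eq_zero hg
  have hAC : AC = coeffMatrix (g : ℂ) := map_coeffMatrix Complex.ofRealHom g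
  have hbC : bC = weights := by
    ext i; fin_cases i <;> simp [bC, b, weights]
  have hR : R = stabilityFunction (coeffMatrix (g : ℂ)) weights := by
    rw [← hAC, ← hbC]; rfl
  refine ⟨fun z hz => ⟨?_, hR ▸ norm_stabilityFunction_le_one hg hz⟩, ?_, ?_⟩
  · exact hAC ▸ isUnit_one_sub_smul_coeffMatrix (one_sub_mul_ofReal_ne_zero hg₀.le hz)
  · rw [show A = coeffMatrix g from rfl, show b = weights from rfl,
      weights_dotProduct_inv_mulVec_one hg₀.ne', hg, zero_div, sub_zero]
  · have hgC : (g : ℂ) ^ 2 - 2 * g + 1 / 2 = 0 := by simpa using congrArg Complex.ofReal hg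
    rw [comap_norm_atTop, hR]
    simpa only [hgC, zero_div] using
      tendsto_stabilityFunction_coeffMatrix (Complex.ofReal_ne_zero.2 hg₀.ne')
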